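/- Duality: if (μ_t) solves the MRE and (Σ_t) is the labelled partitioning process (Markov chain on labelled partitions of [n] with transition matrix T), then for all labelled partitions 𝛅 and all initial metapopulations μ_0, E[R_{Σ_t}(μ_0) | Σ_0 = 𝛅] = R_𝛅(μ_t). In particular μ_t(α) = E[R_{Σ_t}(μ_0) | Σ_0 = {([n],α)}]. -/

import Mathlib

open scoped Classical

variable {n : ℕ}

/-- `P` is a partition of the finite set `U` of sites. -/
def IsPartition (U : Finset (Fin n)) (P : Finset (Finset (Fin n))) : Prop :=
  (∀ b ∈ P, b.Nonempty) ∧ (∀ b ∈ P, ∀ c ∈ P, b ≠ c → Disjoint b c) ∧ P.sup id = U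

/-- A labelled partition of `U` (with labels in `L`), encoded as a finite set of
(block, label) pairs whose blocks form a partition of `U`. -/
def IsLabelledPartition {L : Type*} (U : Finset (Fin n)) (D : Finset (Finset (Fin n) × L)) : Prop :=
  IsPartition U (D.image Prod.fst) ∧ ∀ p ∈ D, ∀ q ∈ D, p.1 = q.1 → p = q

/-- The induced labelled partition `𝛅|_V`. -/
noncomputable def restrictL {L : Type*} (D : Finset (Finset (Fin n) × L)) (V : Finset (Fin n)) :
    Finset (Finset (Fin n) × L) :=
  (D.image fun p => (p.1 ∩ V, p.2)).filter fun p => p.1.Nonempty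

/-- The induced (unlabelled) partition `δ|_V`. -/
def restrictP (P : Finset (Finset (Fin n))) (V : Finset (Fin n)) : Finset (Finset (Fin n)) :=
  (P.image fun d => d ∩ V).filter fun d => d.Nonempty

/-- `𝛆` is finer than `𝛅` (the base of `𝛆` refines the base of `𝛅`). -/
def RefinesL {L : Type*} (E D : Finset (Finset (Fin n) × L)) : Prop :=
  ∀ p ∈ E, ∃ q ∈ D, p.1 ⊆ q.1

/-- `ε` refines `δ` for unlabelled partitions. -/
def RefinesP (Q P : Finset (Finset (Fin n))) : Prop :=
  ∀ e ∈ Q, ∃ d ∈ P, e ⊆ d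

/-- Configurations (marginal types) over a subset `U` of sites. -/
abbrev Cfg (A : Fin n → Type*) (U : Finset (Fin n)) : Type _ :=
  ∀ i : U, A i.1

/-- Restriction of a configuration to a smaller index set. -/
def res (A : Fin n → Type*) {U V : Finset (Fin n)} (h : V ⊆ U) (x : Cfg A U) : Cfg A V :=
  fun i => x ⟨i.1, h i.2⟩

/-- Marginal of a measure (as a function on configurations) with respect to `V ⊆ U`. -/
noncomputable def marg (A : Fin n → Type*) [∀ i, Fintype (A i)]
    {U V : Finset (Fin n)} (h : V ⊆ U) (ν : Cfg A U → ℝ) : Cfg A V → ℝ :=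
  fun x => ∑ y : Cfg A U, if res A h y = x then ν y else 0

/-- The labelled recombinator `R^U_𝛅(ν) = ⊗_{(d,λ)∈𝛅} ν^d(λ)`, evaluated pointwise. -/
noncomputable def recomb (A : Fin n → Type*) [∀ i, Fintype (A i)] {L : Type*}
    {U : Finset (Fin n)} (D : Finset (Finset (Fin n) × L)) (ν : L → Cfg A U → ℝ) :
    Cfg A U → ℝ :=
  fun x => ∏ p ∈ D, marg A (Finset.inter_subset_right : p.1 ∩ U ⊆ U) (ν p.2)
      (res A (Finset.inter_subset_right : p.1 ∩ U ⊆ U) x)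

/-- The finite set of all partitions of `U`. -/
noncomputable def partitionsOf (U : Finset (Fin n)) : Finset (Finset (Finset (Fin n))) :=
  Finset.univ.filter fun P => IsPartition U P

/-- The finite set of all labelled partitions of `U` with labels in `L`. -/
noncomputable def lpartitionsOf (L : Type*) [Fintype L] (U : Finset (Fin n)) :
    Finset (Finset (Finset (Fin n) × L)) :=
  Finset.univ.filter fun D => IsLabelledPartition U D

/-- The migration-recombination probability `p_𝛅(α) = r_δ ∏_{(d,λ)∈𝛅} M(α,λ)`. -/
def pmr {L : Type*} (M : L → L → ℝ) (r : Finset (Finset (Fin n)) → ℝ)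
    (D : Finset (Finset (Fin n) × L)) (α : L) : ℝ :=
  r (D.image Prod.fst) * ∏ p ∈ D, M α p.2

/-- One step of the migration-recombination equation (MRE), evaluated pointwise:
`μ'(α) = ∑_δ r_δ ⊗_{d∈δ} ∑_β M(α,β) μ^d(β)`. -/
noncomputable def MREstep (A : Fin n → Type*) [∀ i, Fintype (A i)] {L : Type*} [Fintype L]
    (M : L → L → ℝ) (r : Finset (Finset (Fin n)) → ℝ)
    (μ : L → Cfg A Finset.univ → ℝ) (α : L) : Cfg A Finset.univ → ℝ :=
  fun x => ∑ P ∈ partitionsOf (Finset.univ : Finset (Fin n)), r P *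
    ∏ d ∈ P, ∑ β : L, M α β *
      marg A (Finset.subset_univ d) (μ β) (res A (Finset.subset_univ d) x)

/-- The marginal migration-recombination probability, in factorised form (Lemma 4.3):
`p^U_𝛅(α) = (∑_{δ' : δ'|_U = base 𝛅} r_{δ'}) ∏_{(d,λ)∈𝛅} M(α,λ)`. -/
noncomputable def pUfact {L : Type*} (M : L → L → ℝ) (r : Finset (Finset (Fin n)) → ℝ)
    (U : Finset (Fin n)) (D : Finset (Finset (Fin n) × L)) (α : L) : ℝ :=
  (∑ P ∈ (partitionsOf (Finset.univ : Finset (Fin n))).filter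
      (fun P => restrictP P U = D.image Prod.fst), r P) * ∏ p ∈ D, M α p.2

/-- The entry `T_{𝛅𝛆}` of the transition matrix of the labelled partitioning process. -/
noncomputable def Tent {L : Type*} (M : L → L → ℝ) (r : Finset (Finset (Fin n)) → ℝ)
    (D E : Finset (Finset (Fin n) × L)) : ℝ :=
  if RefinesL E D then ∏ p ∈ D, pUfact M r p.1 (restrictL E p.1) p.2 else 0

/-- The type of labelled partitions of `[n]` with labels in `L`. -/
abbrev LPfull (n : ℕ) (L : Type*) :=
  {D : Finset (Finset (Fin n) × L) // IsLabelledPartition (Finset.univ : Finset (Fin n)) D}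

/-- The transition matrix `T` of the labelled partitioning process. -/
noncomputable def TmatM {L : Type*} (M : L → L → ℝ) (r : Finset (Finset (Fin n)) → ℝ) :
    Matrix (LPfull n L) (LPfull n L) ℝ :=
  fun D E => Tent M r D.1 E.1

/-- The expectation `E[f(Σ_t) | Σ_0 = D]` for the labelled partitioning process, the
Markov chain on labelled partitions with transition matrix `T` (computed via powers of `T`). -/
noncomputable def lppExp {L : Type*} [Fintype L] [DecidableEq L]
    (M : L → L → ℝ) (r : Finset (Finset (Fin n)) → ℝ) (t : ℕ)
    (D : LPfull n L) (f : LPfull n L → ℝ) : ℝ :=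
  ∑ E : LPfull n L, (TmatM M r ^ t) D E * f E


section AuxDuality

open Finset

set_option linter.unusedSectionVars false

variable {A : Fin n → Type*} [∀ i, Fintype (A i)]

lemma res_res {U V W : Finset (Fin n)} (h : W ⊆ V) (h' : V ⊆ U) (y : Cfg A U) :
    res A h (res A h' y) = res A (h.trans h') y := rfl

lemma res_id {U : Finset (Fin n)} (h : U ⊆ U) (y : Cfg A U) : res A h y = y := rfl

lemma marg_marg {U V W : Finset (Fin n)} (h : W ⊆ V) (h' : V ⊆ U) (ν : Cfg A U → ℝ)
    (z : Cfg A W) : marg A h (marg A h' ν) z = marg A (h.trans h') ν z := by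
  unfold marg
  have : ∀ z' : Cfg A V, (if res A h z' = z then (∑ y : Cfg A U, if res A h' y = z' then ν y else 0) else 0)
      = ∑ y : Cfg A U, if res A h' y = z' then (if res A h z' = z then ν y else 0) else 0 := by
    intro z'; split <;> simp
  rw [Finset.sum_congr rfl (fun z' _ => this z'), Finset.sum_comm]
  refine Finset.sum_congr rfl fun y _ => ?_
  have : ∀ z' : Cfg A V, (if res A h' y = z' then (if res A h z' = z then ν y else 0) else 0)
      = if res A h' y = z' then (if res A h (res A h' y) = z then ν y else 0) else 0 := by
    intro z'; by_cases hz : res A h' y = z' <;> simp [hz]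
  rw [Finset.sum_congr rfl (fun z' _ => this z'), Finset.sum_ite_eq]
  simp [res_res]
  exact if_congr Iff.rfl rfl rfl

lemma marg_res_congr {U V V' : Finset (Fin n)} (hV : V = V') (h : V ⊆ U) (h' : V' ⊆ U)
    (ν : Cfg A U → ℝ) (x : Cfg A U) :
    marg A h ν (res A h x) = marg A h' ν (res A h' x) := by subst hV; rfl

lemma marg_self {U : Finset (Fin n)} (h : U ⊆ U) (ν : Cfg A U → ℝ) (x : Cfg A U) :
    marg A h ν (res A h x) = ν x := by
  have hres : ∀ y : Cfg A U, res A h y = y := fun y => rfl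
  simp only [marg, hres]
  rw [Finset.sum_ite_eq' Finset.univ x ν]
  simp

lemma sum_marg {U V : Finset (Fin n)} (h : V ⊆ U) (ν : Cfg A U → ℝ) :
    ∑ z : Cfg A V, marg A h ν z = ∑ y : Cfg A U, ν y := by
  unfold marg
  rw [Finset.sum_comm]
  refine Finset.sum_congr rfl fun y _ => ?_
  rw [Finset.sum_ite_eq Finset.univ (res A h y) (fun _ => ν y)]
  simp

lemma cfg_eq_of_empty {V : Finset (Fin n)} (hV : ¬ V.Nonempty) (x y : Cfg A V) : x = y := by
  funext i; exact absurd ⟨i.1, i.2⟩ hV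

lemma isPartition_existsUnique {U : Finset (Fin n)} {P : Finset (Finset (Fin n))}
    (hP : IsPartition U P) {i : Fin n} (hi : i ∈ U) : ∃! e, e ∈ P ∧ i ∈ e := by
  obtain ⟨h1, h2, h3⟩ := hP
  rw [← h3, Finset.mem_sup] at hi
  obtain ⟨e, he, hie⟩ := hi
  refine ⟨e, ⟨he, hie⟩, fun e' ⟨he', hie'⟩ => ?_⟩
  by_contra hne
  exact (Finset.disjoint_left.mp (h2 e' he' e he hne)) hie' hie

lemma isPartition_subset {U : Finset (Fin n)} {P : Finset (Finset (Fin n))}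
    (hP : IsPartition U P) {e : Finset (Fin n)} (he : e ∈ P) : e ⊆ U :=
  hP.2.2 ▸ Finset.le_sup (f := id) he

variable {P : Finset (Finset (Fin n))}

noncomputable def blockOf (hP : IsPartition (Finset.univ : Finset (Fin n)) P) (i : Fin n) :
    Finset (Fin n) :=
  P.choose (fun e => i ∈ e) (isPartition_existsUnique hP (Finset.mem_univ i))

lemma blockOf_mem (hP : IsPartition (Finset.univ : Finset (Fin n)) P) (i : Fin n) :
    blockOf hP i ∈ P :=
  Finset.choose_mem _ _ _

lemma mem_blockOf (hP : IsPartition (Finset.univ : Finset (Fin n)) P) (i : Fin n) :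
    i ∈ blockOf hP i :=
  Finset.choose_property (fun e => i ∈ e) _ _

lemma blockOf_eq (hP : IsPartition (Finset.univ : Finset (Fin n)) P) {i : Fin n}
    {e : Finset (Fin n)} (he : e ∈ P) (hie : i ∈ e) : blockOf hP i = e :=
  (isPartition_existsUnique hP (Finset.mem_univ i)).unique
    ⟨blockOf_mem hP i, mem_blockOf hP i⟩ ⟨he, hie⟩

lemma apply_block_congr (G : ∀ e : {e // e ∈ P}, Cfg A e.1) {a b : {e // e ∈ P}} (hab : a = b)
    {i : Fin n} (hia : i ∈ a.1) (hib : i ∈ b.1) : G a ⟨i, hia⟩ = G b ⟨i, hib⟩ := by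
  subst hab; rfl

noncomputable def cfgEquiv (A : Fin n → Type*) [∀ i, Fintype (A i)]
    (hP : IsPartition (Finset.univ : Finset (Fin n)) P) :
    Cfg A Finset.univ ≃ ∀ e : {e // e ∈ P}, Cfg A e.1 where
  toFun y := fun e i => y ⟨i.1, Finset.mem_univ _⟩
  invFun G := fun i => G ⟨blockOf hP i.1, blockOf_mem hP i.1⟩ ⟨i.1, mem_blockOf hP i.1⟩
  left_inv y := rfl
  right_inv G := by
    funext e i
    exact apply_block_congr G (Subtype.ext (blockOf_eq hP e.2 i.2)) _ _

lemma res_cfgEquiv_symm (hP : IsPartition (Finset.univ : Finset (Fin n)) P)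
    (G : ∀ e : {e // e ∈ P}, Cfg A e.1) {e : Finset (Fin n)} (he : e ∈ P) :
    res A (Finset.subset_univ e) ((cfgEquiv A hP).symm G) = G ⟨e, he⟩ := by
  funext i
  exact apply_block_congr G (Subtype.ext (blockOf_eq hP he i.2)) _ _

lemma sum_prod_blocks (hP : IsPartition (Finset.univ : Finset (Fin n)) P)
    (g : (e : Finset (Fin n)) → Cfg A e → ℝ) :
    ∑ y : Cfg A Finset.univ, ∏ e ∈ P, g e (res A (Finset.subset_univ e) y)
      = ∏ e ∈ P, ∑ w : Cfg A e, g e w := by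
  rw [← Equiv.sum_comp (cfgEquiv A hP).symm
    (fun y => ∏ e ∈ P, g e (res A (Finset.subset_univ e) y))]
  have step1 : ∀ G : ∀ e : {e // e ∈ P}, Cfg A e.1,
      ∏ e ∈ P, g e (res A (Finset.subset_univ e) ((cfgEquiv A hP).symm G))
        = ∏ e : {e // e ∈ P}, g e.1 (G e) := by
    intro G
    rw [← Finset.prod_attach P (fun e => g e (res A (Finset.subset_univ e) ((cfgEquiv A hP).symm G))),
      ← Finset.univ_eq_attach]
    exact Finset.prod_congr rfl fun e _ => by rw [res_cfgEquiv_symm hP G e.2]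
  rw [Finset.sum_congr rfl fun G _ => step1 G]
  rw [← Finset.prod_attach P (fun e => ∑ w : Cfg A e, g e w), ← Finset.univ_eq_attach]
  rw [Finset.prod_univ_sum]
  rw [Fintype.piFinset_univ]


lemma blocks_eq_of_not_disjoint {U : Finset (Fin n)} {P : Finset (Finset (Fin n))}
    (hP : IsPartition U P) {e f : Finset (Fin n)} (he : e ∈ P) (hf : f ∈ P)
    (h : ¬ Disjoint e f) : e = f :=
  by_contra fun hne => h (hP.2.1 e he f hf hne)

lemma lp_eq_of_not_disjoint {L : Type*} {U : Finset (Fin n)} {E : Finset (Finset (Fin n) × L)}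
    (hE : IsLabelledPartition U E) {p q : Finset (Fin n) × L} (hp : p ∈ E) (hq : q ∈ E)
    (h : ¬ Disjoint p.1 q.1) : p = q := by
  have h1 : p.1 = q.1 := blocks_eq_of_not_disjoint hE.1
    (Finset.mem_image_of_mem Prod.fst hp) (Finset.mem_image_of_mem Prod.fst hq) h
  exact hE.2 p hp q hq h1

lemma restrictP_isPartition {W U : Finset (Fin n)} {P : Finset (Finset (Fin n))}
    (hP : IsPartition W P) (hU : U ⊆ W) : IsPartition U (restrictP P U) := by
  refine ⟨?_, ?_, ?_⟩
  · intro b hb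
    exact (Finset.mem_filter.mp hb).2
  · intro b hb c hc hbc
    obtain ⟨e, he, rfl⟩ := Finset.mem_image.mp (Finset.mem_filter.mp hb).1
    obtain ⟨f, hf, rfl⟩ := Finset.mem_image.mp (Finset.mem_filter.mp hc).1
    have hef : e ≠ f := fun h => hbc (by rw [h])
    exact Finset.disjoint_left.mpr fun a ha ha' =>
      Finset.disjoint_left.mp (hP.2.1 e he f hf hef) (Finset.mem_inter.mp ha).1
        (Finset.mem_inter.mp ha').1
  · apply le_antisymm
    · rw [Finset.sup_le_iff]
      intro b hb
      obtain ⟨e, he, rfl⟩ := Finset.mem_image.mp (Finset.mem_filter.mp hb).1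
      exact Finset.inter_subset_right
    · intro i hi
      have hiW : i ∈ W := hU hi
      rw [← hP.2.2, Finset.mem_sup] at hiW
      obtain ⟨e, he, hie⟩ := hiW
      rw [Finset.mem_sup]
      refine ⟨e ∩ U, Finset.mem_filter.mpr ⟨Finset.mem_image_of_mem _ he,
        ⟨i, Finset.mem_inter.mpr ⟨hie, hi⟩⟩⟩, Finset.mem_inter.mpr ⟨hie, hi⟩⟩

lemma restrictL_image_fst {L : Type*} (E : Finset (Finset (Fin n) × L)) (V : Finset (Fin n)) :
    (restrictL E V).image Prod.fst = restrictP (E.image Prod.fst) V := by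
  ext b
  simp only [restrictL, restrictP, Finset.mem_image, Finset.mem_filter]
  constructor
  · rintro ⟨p, ⟨⟨q, hq, rfl⟩, hne⟩, rfl⟩
    exact ⟨⟨q.1, ⟨q, hq, rfl⟩, rfl⟩, hne⟩
  · rintro ⟨⟨c, ⟨q, hq, rfl⟩, rfl⟩, hne⟩
    exact ⟨(q.1 ∩ V, q.2), ⟨⟨q, hq, rfl⟩, hne⟩, rfl⟩

lemma restrictL_isLP {L : Type*} {E : Finset (Finset (Fin n) × L)}
    (hE : IsLabelledPartition (Finset.univ : Finset (Fin n)) E) (V : Finset (Fin n)) :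
    IsLabelledPartition V (restrictL E V) := by
  constructor
  · rw [restrictL_image_fst]
    exact restrictP_isPartition hE.1 (Finset.subset_univ V)
  · rintro p hp q hq hfst
    obtain ⟨hp1, hpne⟩ := Finset.mem_filter.mp hp
    obtain ⟨hq1, hqne⟩ := Finset.mem_filter.mp hq
    obtain ⟨a, ha, rfl⟩ := Finset.mem_image.mp hp1
    obtain ⟨b, hb, rfl⟩ := Finset.mem_image.mp hq1
    simp only at hfst hpne hqne
    have hab : a = b := by
      apply lp_eq_of_not_disjoint hE ha hb
      intro hdis
      obtain ⟨i, hi⟩ := hpne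
      have hi' : i ∈ b.1 ∩ V := hfst ▸ hi
      exact Finset.disjoint_left.mp hdis (Finset.mem_inter.mp hi).1 (Finset.mem_inter.mp hi').1
    rw [hab]

lemma restrictL_eq_filter {L : Type*} {E : Finset (Finset (Fin n) × L)} {V : Finset (Fin n)}
    (hne : ∀ q ∈ E, q.1.Nonempty) (h : ∀ q ∈ E, q.1 ⊆ V ∨ q.1 ∩ V = ∅) :
    restrictL E V = E.filter fun q => q.1 ⊆ V := by
  ext p
  simp only [restrictL, Finset.mem_filter, Finset.mem_image]
  constructor
  · rintro ⟨⟨q, hq, rfl⟩, hne'⟩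
    rcases h q hq with hsub | hdis
    · rw [Finset.inter_eq_left.mpr hsub]
      exact ⟨hq, hsub⟩
    · rw [hdis] at hne'
      exact absurd hne' (by simp)
  · rintro ⟨hp, hsub⟩
    exact ⟨⟨p, hp, by rw [Finset.inter_eq_left.mpr hsub]⟩, hne p hp⟩

lemma mem_partitionsOf {U : Finset (Fin n)} {P : Finset (Finset (Fin n))} :
    P ∈ partitionsOf U ↔ IsPartition U P := by
  simp [partitionsOf]

lemma mem_lpartitionsOf {L : Type*} [Fintype L] {U : Finset (Fin n)}
    {D : Finset (Finset (Fin n) × L)} :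
    D ∈ lpartitionsOf L U ↔ IsLabelledPartition U D := by
  simp [lpartitionsOf]

lemma marg_prod_blocks {P : Finset (Finset (Fin n))}
    (hP : IsPartition (Finset.univ : Finset (Fin n)) P)
    (U : Finset (Fin n)) (g : (e : Finset (Fin n)) → Cfg A e → ℝ) (x : Cfg A Finset.univ) :
    marg A (Finset.subset_univ U) (fun y => ∏ e ∈ P, g e (res A (Finset.subset_univ e) y))
        (res A (Finset.subset_univ U) x)
      = ∏ e ∈ P, marg A (Finset.inter_subset_left : e ∩ U ⊆ e) (g e)
          (res A (Finset.subset_univ (e ∩ U)) x) := by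
  have stepA : ∀ y : Cfg A Finset.univ,
      (if res A (Finset.subset_univ U) y = res A (Finset.subset_univ U) x
        then ∏ e ∈ P, g e (res A (Finset.subset_univ e) y) else 0)
      = ∏ e ∈ P, (g e (res A (Finset.subset_univ e) y) *
          if res A (Finset.inter_subset_left : e ∩ U ⊆ e) (res A (Finset.subset_univ e) y)
            = res A (Finset.subset_univ (e ∩ U)) x then 1 else 0) := by
    intro y
    by_cases hc : res A (Finset.subset_univ U) y = res A (Finset.subset_univ U) x
    · rw [if_pos hc]
      have hsub : ∀ e ∈ P,
          res A (Finset.inter_subset_left : e ∩ U ⊆ e) (res A (Finset.subset_univ e) y)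
            = res A (Finset.subset_univ (e ∩ U)) x := by
        intro e _
        have := congrArg (res A (Finset.inter_subset_right : e ∩ U ⊆ U)) hc
        rw [res_res, res_res] at this
        rw [res_res]
        exact this
      refine Finset.prod_congr rfl fun e he => ?_
      rw [if_pos (hsub e he), mul_one]
    · rw [if_neg hc]
      by_cases hall : ∀ e ∈ P,
          res A (Finset.inter_subset_left : e ∩ U ⊆ e) (res A (Finset.subset_univ e) y)
            = res A (Finset.subset_univ (e ∩ U)) x
      · exfalso
        apply hc
        funext i
        have hiu : i.1 ∈ P.sup id := by rw [hP.2.2]; exact Finset.mem_univ i.1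
        rw [Finset.mem_sup] at hiu
        obtain ⟨e, he, hie⟩ := hiu
        exact congrFun (hall e he) ⟨i.1, Finset.mem_inter.mpr ⟨hie, i.2⟩⟩
      · push_neg at hall
        obtain ⟨e, he, hne⟩ := hall
        rw [Finset.prod_eq_zero he (by rw [if_neg hne, mul_zero])]
  conv_lhs => rw [marg]
  rw [Finset.sum_congr rfl fun y _ => stepA y]
  rw [sum_prod_blocks hP (fun e w => g e w *
    if res A (Finset.inter_subset_left : e ∩ U ⊆ e) w
      = res A (Finset.subset_univ (e ∩ U)) x then 1 else 0)]
  refine Finset.prod_congr rfl fun e _ => ?_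
  rw [marg]
  refine Finset.sum_congr rfl fun w _ => ?_
  by_cases hw : res A (Finset.inter_subset_left : e ∩ U ⊆ e) w
      = res A (Finset.subset_univ (e ∩ U)) x
  · rw [if_pos hw, if_pos hw, mul_one]
  · rw [if_neg hw, if_neg hw, mul_zero]


lemma ite_sum_swap {c : Prop} [Decidable c] {ι : Type*} (s : Finset ι) (f : ι → ℝ) :
    (if c then ∑ i ∈ s, f i else 0) = ∑ i ∈ s, if c then f i else 0 := by
  split <;> simp

lemma ite_mul_const {c : Prop} [Decidable c] (a b : ℝ) :
    (if c then a * b else 0) = a * (if c then b else 0) := by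
  split <;> simp

lemma marg_sum {ι : Type*} [Fintype ι] {U V : Finset (Fin n)} (h : V ⊆ U) (c : ι → ℝ)
    (ν : ι → Cfg A U → ℝ) (z : Cfg A V) :
    marg A h (fun w => ∑ β, c β * ν β w) z = ∑ β, c β * marg A h (ν β) z := by
  unfold marg
  rw [Finset.sum_congr rfl fun y _ => ite_sum_swap _ _, Finset.sum_comm]
  refine Finset.sum_congr rfl fun β _ => ?_
  rw [Finset.sum_congr rfl fun y _ => ite_mul_const _ _, ← Finset.mul_sum]

lemma mass_one_of_empty {e U : Finset (Fin n)} (h : ¬ (e ∩ U).Nonempty)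
    (g : Cfg A e → ℝ) (hg : ∑ w : Cfg A e, g w = 1) (z : Cfg A (e ∩ U)) :
    marg A (Finset.inter_subset_left : e ∩ U ⊆ e) g z = 1 := by
  unfold marg
  rw [Finset.sum_congr rfl fun w _ => if_pos (cfg_eq_of_empty h _ _), hg]

lemma sum_block_dist {L : Type*} [Fintype L] (M : L → L → ℝ) (hM1 : ∀ α, ∑ β, M α β = 1)
    (μ : L → Cfg A Finset.univ → ℝ) (hprob : ∀ β, ∑ x, μ β x = 1) (lam : L)
    (e : Finset (Fin n)) :
    ∑ w : Cfg A e, ∑ β, M lam β * marg A (Finset.subset_univ e) (μ β) w = 1 := by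
  rw [Finset.sum_comm]
  have : ∀ β : L, ∑ w : Cfg A e, M lam β * marg A (Finset.subset_univ e) (μ β) w = M lam β := by
    intro β
    rw [← Finset.mul_sum, sum_marg, hprob, mul_one]
  rw [Finset.sum_congr rfl fun β _ => this β, hM1]

lemma sum_MREstep {L : Type*} [Fintype L] (M : L → L → ℝ) (hM1 : ∀ α, ∑ β, M α β = 1)
    (r : Finset (Finset (Fin n)) → ℝ)
    (hr1 : ∑ P ∈ partitionsOf (Finset.univ : Finset (Fin n)), r P = 1)
    (μ : L → Cfg A Finset.univ → ℝ) (hprob : ∀ β, ∑ x, μ β x = 1) (α : L) :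
    ∑ x : Cfg A Finset.univ, MREstep A M r μ α x = 1 := by
  unfold MREstep
  rw [Finset.sum_comm, ← hr1]
  refine Finset.sum_congr rfl fun P hP => ?_
  rw [← Finset.mul_sum,
    sum_prod_blocks (mem_partitionsOf.mp hP)
      (fun d w => ∑ β, M α β * marg A (Finset.subset_univ d) (μ β) w),
    Finset.prod_congr rfl fun d _ => sum_block_dist M hM1 μ hprob α d,
    Finset.prod_const_one, mul_one]

lemma label_existsUnique {L : Type*} {F : Finset (Finset (Fin n) × L)}
    (hF : ∀ p ∈ F, ∀ q ∈ F, p.1 = q.1 → p = q) {e : Finset (Fin n)}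
    (he : e ∈ F.image Prod.fst) : ∃! q, q ∈ F ∧ q.1 = e := by
  obtain ⟨q, hq, rfl⟩ := Finset.mem_image.mp he
  exact ⟨q, ⟨hq, rfl⟩, fun q' ⟨hq', h'⟩ => hF q' hq' q hq h'⟩

noncomputable def labelFn {L : Type*} (F : Finset (Finset (Fin n) × L))
    (hlab : ∀ p ∈ F, ∀ q ∈ F, p.1 = q.1 → p = q) (e : Finset (Fin n))
    (he : e ∈ F.image Prod.fst) : L :=
  (F.choose (fun q => q.1 = e) (label_existsUnique hlab he)).2

lemma labelFn_eq {L : Type*} {F : Finset (Finset (Fin n) × L)}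
    (hlab : ∀ p ∈ F, ∀ q ∈ F, p.1 = q.1 → p = q) {e : Finset (Fin n)}
    (he : e ∈ F.image Prod.fst) {q : Finset (Fin n) × L} (hq : q ∈ F) (hqe : q.1 = e) :
    labelFn F hlab e he = q.2 := by
  unfold labelFn
  have h1 : F.choose (fun q => q.1 = e) (label_existsUnique hlab he) ∈ F :=
    Finset.choose_mem _ _ _
  have h2 : (F.choose (fun q => q.1 = e) (label_existsUnique hlab he)).1 = e :=
    Finset.choose_property (fun q : Finset (Fin n) × L => q.1 = e) _ _
  rw [(label_existsUnique hlab he).unique ⟨h1, h2⟩ ⟨hq, hqe⟩]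

lemma labelFn_mem {L : Type*} {F : Finset (Finset (Fin n) × L)}
    (hlab : ∀ p ∈ F, ∀ q ∈ F, p.1 = q.1 → p = q) {e : Finset (Fin n)}
    (he : e ∈ F.image Prod.fst) : (e, labelFn F hlab e he) ∈ F := by
  unfold labelFn
  have h1 : F.choose (fun q => q.1 = e) (label_existsUnique hlab he) ∈ F :=
    Finset.choose_mem _ _ _
  have h2 : (F.choose (fun q => q.1 = e) (label_existsUnique hlab he)).1 = e :=
    Finset.choose_property (fun q : Finset (Fin n) × L => q.1 = e) _ _
  have h3 : (e, (F.choose (fun q => q.1 = e) (label_existsUnique hlab he)).2)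
      = F.choose (fun q => q.1 = e) (label_existsUnique hlab he) :=
    Prod.ext_iff.mpr ⟨h2.symm, rfl⟩
  rw [h3]
  exact h1

lemma prod_sum_labels {L : Type*} [Fintype L] [DecidableEq L] {U : Finset (Fin n)}
    {Q : Finset (Finset (Fin n))} (hQ : IsPartition U Q) (c : Finset (Fin n) → L → ℝ) :
    ∏ e ∈ Q, ∑ β : L, c e β
      = ∑ F ∈ (lpartitionsOf L U).filter (fun F => F.image Prod.fst = Q),
          ∏ q ∈ F, c q.1 q.2 := by
  rw [show (∏ e ∈ Q, ∑ β : L, c e β) = ∏ e ∈ Q, ∑ β ∈ Finset.univ, c e β from rfl,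
    Finset.prod_sum Q (fun _ => (Finset.univ : Finset L)) c]
  refine Finset.sum_bij' (i := fun ℓ hℓ => Q.attach.image fun e => (e.1, ℓ e.1 e.2))
    (j := fun F hF => fun e he =>
      labelFn F (mem_lpartitionsOf.mp (Finset.mem_filter.mp hF).1).2 e
        (by rw [(Finset.mem_filter.mp hF).2]; exact he))
    ?_ ?_ ?_ ?_ ?_
  · intro ℓ hℓ
    have himg : (Q.attach.image fun e => (e.1, ℓ e.1 e.2)).image Prod.fst = Q := by
      rw [Finset.image_image]
      exact Finset.attach_image_val
    refine Finset.mem_filter.mpr ⟨mem_lpartitionsOf.mpr ⟨by rw [himg]; exact hQ, ?_⟩, himg⟩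
    rintro p hp q hq hfst
    obtain ⟨a, _, rfl⟩ := Finset.mem_image.mp hp
    obtain ⟨b, _, rfl⟩ := Finset.mem_image.mp hq
    simp only at hfst
    have hab : a = b := Subtype.ext hfst
    rw [hab]
  · intro F hF
    exact Finset.mem_pi.mpr fun e he => Finset.mem_univ _
  · intro ℓ hℓ
    funext e he
    exact labelFn_eq _ _ (q := (e, ℓ e he))
      (Finset.mem_image_of_mem (fun a : {x // x ∈ Q} => ((a : Finset (Fin n)), ℓ a.1 a.2))
        (Finset.mem_attach Q ⟨e, he⟩)) rfl
  · intro F hF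
    ext p
    simp only [Finset.mem_image]
    constructor
    · rintro ⟨a, _, rfl⟩
      exact labelFn_mem _ _
    · intro hp
      have hp1 : p.1 ∈ Q := (Finset.mem_filter.mp hF).2 ▸ Finset.mem_image_of_mem Prod.fst hp
      refine ⟨⟨p.1, hp1⟩, Finset.mem_attach _ _, ?_⟩
      have hlf := labelFn_eq (mem_lpartitionsOf.mp (Finset.mem_filter.mp hF).1).2
        (e := p.1) (by rw [(Finset.mem_filter.mp hF).2]; exact hp1) hp rfl
      exact Prod.ext_iff.mpr ⟨rfl, hlf⟩
  · intro ℓ hℓ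
    show (∏ x ∈ Q.attach, c x.1 (ℓ x.1 x.2))
      = ∏ q ∈ Q.attach.image (fun e => (e.1, ℓ e.1 e.2)), c q.1 q.2
    refine (Finset.prod_image (f := fun q : Finset (Fin n) × L => c q.1 q.2)
      (g := fun e : {x // x ∈ Q} => ((e : Finset (Fin n)), ℓ e.1 e.2)) ?_).symm
    intro a _ b _ hab
    exact Subtype.ext (congrArg Prod.fst hab)

lemma restrictP_eq (P : Finset (Finset (Fin n))) (U : Finset (Fin n)) :
    restrictP P U = (P.filter fun e => (e ∩ U).Nonempty).image (· ∩ U) := by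
  ext b
  simp only [restrictP, Finset.mem_filter, Finset.mem_image]
  constructor
  · rintro ⟨⟨e, he, rfl⟩, hne⟩
    exact ⟨e, ⟨he, hne⟩, rfl⟩
  · rintro ⟨e, ⟨he, hne⟩, rfl⟩
    exact ⟨⟨e, he, rfl⟩, hne⟩

lemma restrictP_inj_on {P : Finset (Finset (Fin n))} {U W : Finset (Fin n)}
    (hPart : IsPartition W P) :
    ∀ a ∈ P.filter (fun e => (e ∩ U).Nonempty), ∀ b ∈ P.filter (fun e => (e ∩ U).Nonempty),
      a ∩ U = b ∩ U → a = b := by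
  intro a ha b hb hab
  obtain ⟨i, hi⟩ := (Finset.mem_filter.mp ha).2
  refine blocks_eq_of_not_disjoint hPart (Finset.mem_filter.mp ha).1
    (Finset.mem_filter.mp hb).1 ?_
  intro hdis
  have hib : i ∈ b ∩ U := hab ▸ hi
  exact Finset.disjoint_left.mp hdis (Finset.mem_inter.mp hi).1 (Finset.mem_inter.mp hib).1

lemma marg_MREstep {L : Type*} [Fintype L] [DecidableEq L] (M : L → L → ℝ)
    (hM1 : ∀ α, ∑ β, M α β = 1) (r : Finset (Finset (Fin n)) → ℝ)
    (μ : L → Cfg A Finset.univ → ℝ) (hprob : ∀ β, ∑ x, μ β x = 1)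
    (U : Finset (Fin n)) (lam : L) (x : Cfg A Finset.univ) :
    marg A (Finset.subset_univ U) (MREstep A M r μ lam) (res A (Finset.subset_univ U) x)
      = ∑ F ∈ lpartitionsOf L U, pUfact M r U F lam *
          ∏ q ∈ F, marg A (Finset.inter_subset_right : q.1 ∩ Finset.univ ⊆ Finset.univ)
            (μ q.2) (res A Finset.inter_subset_right x) := by
  have hlin : marg A (Finset.subset_univ U) (MREstep A M r μ lam)
        (res A (Finset.subset_univ U) x)
      = ∑ P ∈ partitionsOf (Finset.univ : Finset (Fin n)), r P *
          marg A (Finset.subset_univ U)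
            (fun y => ∏ e ∈ P, (fun w => ∑ β, M lam β * marg A (Finset.subset_univ e) (μ β) w)
              (res A (Finset.subset_univ e) y))
            (res A (Finset.subset_univ U) x) := by
    unfold MREstep marg
    rw [Finset.sum_congr rfl fun y _ => ite_sum_swap _ _, Finset.sum_comm]
    exact Finset.sum_congr rfl fun P _ => by
      rw [Finset.sum_congr rfl fun y _ => ite_mul_const _ _, ← Finset.mul_sum]
  rw [hlin]
  have hstep : ∀ P ∈ partitionsOf (Finset.univ : Finset (Fin n)),
      r P * marg A (Finset.subset_univ U)
          (fun y => ∏ e ∈ P, (fun w => ∑ β, M lam β * marg A (Finset.subset_univ e) (μ β) w)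
            (res A (Finset.subset_univ e) y))
          (res A (Finset.subset_univ U) x)
        = r P * ∏ b ∈ restrictP P U, ∑ β, M lam β *
            marg A (Finset.inter_subset_right : b ∩ Finset.univ ⊆ Finset.univ) (μ β)
              (res A Finset.inter_subset_right x) := by
    intro P hP
    have hPart := mem_partitionsOf.mp hP
    rw [marg_prod_blocks hPart U
      (fun e w => ∑ β, M lam β * marg A (Finset.subset_univ e) (μ β) w) x]
    congr 1
    rw [← Finset.prod_filter_mul_prod_filter_not P (fun e => (e ∩ U).Nonempty),
      Finset.prod_eq_one (fun e he =>
        mass_one_of_empty (Finset.mem_filter.mp he).2 _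
          (sum_block_dist M hM1 μ hprob lam e) _), mul_one,
      restrictP_eq P U,
      Finset.prod_image (restrictP_inj_on hPart)]
    refine Finset.prod_congr rfl fun e he => ?_
    rw [marg_sum (Finset.inter_subset_left : e ∩ U ⊆ e) (fun β => M lam β)
      (fun β => marg A (Finset.subset_univ e) (μ β)) _]
    refine Finset.sum_congr rfl fun β _ => ?_
    rw [marg_marg]
    exact congrArg (fun t => M lam β * t)
      (marg_res_congr (Finset.inter_univ (e ∩ U)).symm _ _ (μ β) x)
  rw [Finset.sum_congr rfl hstep,
    ← Finset.sum_fiberwise_of_maps_to (g := fun P => restrictP P U)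
      (t := partitionsOf U)
      (fun P hP => mem_partitionsOf.mpr
        (restrictP_isPartition (mem_partitionsOf.mp hP) (Finset.subset_univ U)))
      (fun P => r P * ∏ b ∈ restrictP P U, ∑ β, M lam β *
        marg A (Finset.inter_subset_right : b ∩ Finset.univ ⊆ Finset.univ) (μ β)
          (res A Finset.inter_subset_right x))]
  refine Eq.trans (Finset.sum_congr rfl fun Q hQ => ?_)
    (Finset.sum_fiberwise_of_maps_to (g := fun F => F.image Prod.fst)
      (fun F hF => mem_partitionsOf.mpr (mem_lpartitionsOf.mp hF).1)
      (fun F => pUfact M r U F lam *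
        ∏ q ∈ F, marg A (Finset.inter_subset_right : q.1 ∩ Finset.univ ⊆ Finset.univ)
          (μ q.2) (res A Finset.inter_subset_right x)))
  have hQpart := mem_partitionsOf.mp hQ
  calc ∑ P ∈ (partitionsOf (Finset.univ : Finset (Fin n))).filter
        (fun P => restrictP P U = Q),
        r P * ∏ b ∈ restrictP P U, ∑ β, M lam β *
          marg A (Finset.inter_subset_right : b ∩ Finset.univ ⊆ Finset.univ) (μ β)
            (res A Finset.inter_subset_right x)
      = (∑ P ∈ (partitionsOf (Finset.univ : Finset (Fin n))).filter
          (fun P => restrictP P U = Q), r P) *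
          ∏ b ∈ Q, ∑ β, M lam β *
            marg A (Finset.inter_subset_right : b ∩ Finset.univ ⊆ Finset.univ) (μ β)
              (res A Finset.inter_subset_right x) := by
        rw [Finset.sum_mul]
        refine Finset.sum_congr rfl fun P hP => ?_
        rw [(Finset.mem_filter.mp hP).2]
    _ = (∑ P ∈ (partitionsOf (Finset.univ : Finset (Fin n))).filter
          (fun P => restrictP P U = Q), r P) *
          ∑ F ∈ (lpartitionsOf L U).filter (fun F => F.image Prod.fst = Q),
            ∏ q ∈ F, M lam q.2 *
              marg A (Finset.inter_subset_right : q.1 ∩ Finset.univ ⊆ Finset.univ) (μ q.2)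
                (res A Finset.inter_subset_right x) := by
        rw [prod_sum_labels hQpart (fun b β => M lam β *
          marg A (Finset.inter_subset_right : b ∩ Finset.univ ⊆ Finset.univ) (μ β)
            (res A Finset.inter_subset_right x))]
    _ = ∑ F ∈ (lpartitionsOf L U).filter (fun F => F.image Prod.fst = Q),
          pUfact M r U F lam *
            ∏ q ∈ F, marg A (Finset.inter_subset_right : q.1 ∩ Finset.univ ⊆ Finset.univ)
              (μ q.2) (res A Finset.inter_subset_right x) := by
        rw [Finset.mul_sum]
        refine Finset.sum_congr rfl fun F hF => ?_
        rw [Finset.prod_mul_distrib]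
        unfold pUfact
        rw [(Finset.mem_filter.mp hF).2]
        ring

lemma pi_congr' {α β : Type*} {s : Finset α} (σ : ∀ a ∈ s, β) {a b : α} (h : a = b)
    (ha : a ∈ s) (hb : b ∈ s) : σ a ha = σ b hb := by subst h; rfl

lemma lp_block_nonempty {L : Type*} {U : Finset (Fin n)} {E : Finset (Finset (Fin n) × L)}
    (hE : IsLabelledPartition U E) {q : Finset (Fin n) × L} (hq : q ∈ E) : q.1.Nonempty :=
  hE.1.1 q.1 (Finset.mem_image_of_mem Prod.fst hq)

lemma lp_block_subset {L : Type*} {U : Finset (Fin n)} {E : Finset (Finset (Fin n) × L)}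
    (hE : IsLabelledPartition U E) {q : Finset (Fin n) × L} (hq : q ∈ E) : q.1 ⊆ U :=
  isPartition_subset hE.1 (Finset.mem_image_of_mem Prod.fst hq)

lemma lp_disjoint {L : Type*} {U : Finset (Fin n)} {D : Finset (Finset (Fin n) × L)}
    (hD : IsLabelledPartition U D) {p q : Finset (Fin n) × L} (hp : p ∈ D) (hq : q ∈ D)
    (hne : p ≠ q) : Disjoint p.1 q.1 := by
  have h1 : p.1 ≠ q.1 := fun h => hne (hD.2 p hp q hq h)
  exact hD.1.2.1 p.1 (Finset.mem_image_of_mem Prod.fst hp) q.1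
    (Finset.mem_image_of_mem Prod.fst hq) h1

lemma restrictL_of_refines {L : Type*} {E D : Finset (Finset (Fin n) × L)}
    (hE : IsLabelledPartition (Finset.univ : Finset (Fin n)) E)
    (hD : IsLabelledPartition (Finset.univ : Finset (Fin n)) D) (href : RefinesL E D)
    {p : Finset (Fin n) × L} (hp : p ∈ D) :
    restrictL E p.1 = E.filter fun q => q.1 ⊆ p.1 := by
  refine restrictL_eq_filter (fun q hq => lp_block_nonempty hE hq) ?_
  intro q hq
  obtain ⟨d, hd, hsub⟩ := href q hq
  by_cases hdp : d = p
  · left; exact hdp ▸ hsub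
  · right
    rw [← Finset.disjoint_iff_inter_eq_empty]
    exact Finset.disjoint_of_subset_left hsub (lp_disjoint hD hd hp hdp)

section GlueRefine

variable {L : Type*} [DecidableEq L] {D : Finset (Finset (Fin n) × L)}

lemma biUnion_isLP (hD : IsLabelledPartition (Finset.univ : Finset (Fin n)) D)
    (σ : ∀ p ∈ D, Finset (Finset (Fin n) × L))
    (hσ : ∀ p (hp : p ∈ D), IsLabelledPartition p.1 (σ p hp)) :
    IsLabelledPartition (Finset.univ : Finset (Fin n))
      (D.attach.biUnion fun p => σ p.1 p.2) ∧
    RefinesL (D.attach.biUnion fun p => σ p.1 p.2) D := by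
  have hmem : ∀ q : Finset (Fin n) × L, q ∈ (D.attach.biUnion fun p => σ p.1 p.2) ↔
      ∃ a : {x // x ∈ D}, q ∈ σ a.1 a.2 := by
    intro q
    simp only [Finset.mem_biUnion]
    exact ⟨fun ⟨a, _, h⟩ => ⟨a, h⟩, fun ⟨a, h⟩ => ⟨a, Finset.mem_attach _ _, h⟩⟩
  have hsub : ∀ (a : {x // x ∈ D}) {q : Finset (Fin n) × L}, q ∈ σ a.1 a.2 → q.1 ⊆ a.1.1 := by
    intro a q hq; exact lp_block_subset (hσ a.1 a.2) hq
  have hne : ∀ (a : {x // x ∈ D}) {q : Finset (Fin n) × L}, q ∈ σ a.1 a.2 → q.1.Nonempty := by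
    intro a q hq; exact lp_block_nonempty (hσ a.1 a.2) hq
  have hsame : ∀ (a b : {x // x ∈ D}) (q q' : Finset (Fin n) × L), q ∈ σ a.1 a.2 →
      q' ∈ σ b.1 b.2 → ¬ Disjoint q.1 q'.1 → a = b := by
    intro a b q q' hq hq' hdis
    refine Subtype.ext (hD.2 a.1 a.2 b.1 b.2 ?_)
    refine blocks_eq_of_not_disjoint hD.1 (Finset.mem_image_of_mem Prod.fst a.2)
      (Finset.mem_image_of_mem Prod.fst b.2) ?_
    intro hd
    exact hdis (Finset.disjoint_of_subset_left (hsub a hq)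
      (Finset.disjoint_of_subset_right (hsub b hq') hd))
  constructor
  · constructor
    · refine ⟨?_, ?_, ?_⟩
      · intro b hb
        obtain ⟨q, hq, rfl⟩ := Finset.mem_image.mp hb
        obtain ⟨a, ha⟩ := (hmem q).mp hq
        exact hne a ha
      · intro b hb c hc hbc
        obtain ⟨q, hq, rfl⟩ := Finset.mem_image.mp hb
        obtain ⟨q', hq', rfl⟩ := Finset.mem_image.mp hc
        obtain ⟨a, ha⟩ := (hmem q).mp hq
        obtain ⟨a', ha'⟩ := (hmem q').mp hq'
        rw [Finset.disjoint_left]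
        intro i hi hi'
        have hab : a = a' := hsame a a' q q' ha ha'
          (fun hd => Finset.disjoint_left.mp hd hi hi')
        subst hab
        have : q = q' := (hσ a.1 a.2).2 q ha q' ha'
          (blocks_eq_of_not_disjoint (hσ a.1 a.2).1
            (Finset.mem_image_of_mem Prod.fst ha) (Finset.mem_image_of_mem Prod.fst ha')
            (fun hd => Finset.disjoint_left.mp hd hi hi'))
        exact hbc (by rw [this])
      · apply le_antisymm
        · rw [Finset.sup_le_iff]
          intro b _
          exact Finset.subset_univ b
        · intro i _
          have hiD : i ∈ (D.image Prod.fst).sup id := by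
            rw [hD.1.2.2]; exact Finset.mem_univ i
          rw [Finset.mem_sup] at hiD
          obtain ⟨b, hb, hib⟩ := hiD
          obtain ⟨p, hp, rfl⟩ := Finset.mem_image.mp hb
          have hip : i ∈ ((σ p hp).image Prod.fst).sup id := by
            rw [(hσ p hp).1.2.2]; exact hib
          rw [Finset.mem_sup] at hip
          obtain ⟨c, hc, hic⟩ := hip
          obtain ⟨q, hq, rfl⟩ := Finset.mem_image.mp hc
          rw [Finset.mem_sup]
          exact ⟨q.1, Finset.mem_image_of_mem Prod.fst
            ((hmem q).mpr ⟨⟨p, hp⟩, hq⟩), hic⟩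
    · intro q hq q' hq' hfst
      obtain ⟨a, ha⟩ := (hmem q).mp hq
      obtain ⟨a', ha'⟩ := (hmem q').mp hq'
      have hnd : ¬ Disjoint q.1 q'.1 := by
        rw [hfst]
        obtain ⟨i, hi⟩ := hne a' ha'
        exact fun hd => Finset.disjoint_left.mp hd hi hi
      have hab : a = a' := hsame a a' q q' ha ha' hnd
      subst hab
      exact (hσ a.1 a.2).2 q ha q' ha' hfst
  · intro q hq
    obtain ⟨a, ha⟩ := (hmem q).mp hq
    exact ⟨a.1, a.2, hsub a ha⟩

lemma restrictL_biUnion (hD : IsLabelledPartition (Finset.univ : Finset (Fin n)) D)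
    (σ : ∀ p ∈ D, Finset (Finset (Fin n) × L))
    (hσ : ∀ p (hp : p ∈ D), IsLabelledPartition p.1 (σ p hp))
    {p : Finset (Fin n) × L} (hp : p ∈ D) :
    restrictL (D.attach.biUnion fun a => σ a.1 a.2) p.1 = σ p hp := by
  rw [restrictL_of_refines (biUnion_isLP hD σ hσ).1 hD (biUnion_isLP hD σ hσ).2 hp]
  ext q
  simp only [Finset.mem_filter, Finset.mem_biUnion]
  constructor
  · rintro ⟨⟨a, _, hqa⟩, hsub⟩
    have hq1 : q.1 ⊆ a.1.1 := lp_block_subset (hσ a.1 a.2) hqa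
    have hqne : q.1.Nonempty := lp_block_nonempty (hσ a.1 a.2) hqa
    have hap : a.1 = p := by
      refine hD.2 a.1 a.2 p hp ?_
      refine blocks_eq_of_not_disjoint hD.1 (Finset.mem_image_of_mem Prod.fst a.2)
        (Finset.mem_image_of_mem Prod.fst hp) ?_
      intro hdis
      obtain ⟨i, hi⟩ := hqne
      exact Finset.disjoint_left.mp hdis (hq1 hi) (hsub hi)
    exact pi_congr' σ hap a.2 hp ▸ hqa
  · intro hq
    exact ⟨⟨⟨p, hp⟩, Finset.mem_attach _ _, hq⟩, lp_block_subset (hσ p hp) hq⟩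

lemma biUnion_restrictL (hD : IsLabelledPartition (Finset.univ : Finset (Fin n)) D)
    {E : Finset (Finset (Fin n) × L)}
    (hE : IsLabelledPartition (Finset.univ : Finset (Fin n)) E) (href : RefinesL E D) :
    (D.attach.biUnion fun p => restrictL E p.1.1) = E := by
  ext q
  simp only [Finset.mem_biUnion]
  constructor
  · rintro ⟨a, _, hqa⟩
    rw [restrictL_of_refines hE hD href a.2] at hqa
    exact (Finset.mem_filter.mp hqa).1
  · intro hq
    obtain ⟨d, hd, hsub⟩ := href q hq
    refine ⟨⟨d, hd⟩, Finset.mem_attach _ _, ?_⟩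
    rw [restrictL_of_refines hE hD href hd]
    exact Finset.mem_filter.mpr ⟨hq, hsub⟩

lemma sigma_pairwise_disjoint (hD : IsLabelledPartition (Finset.univ : Finset (Fin n)) D)
    (σ : ∀ p ∈ D, Finset (Finset (Fin n) × L))
    (hσ : ∀ p (hp : p ∈ D), IsLabelledPartition p.1 (σ p hp)) :
    Set.PairwiseDisjoint (↑D.attach : Set {x // x ∈ D}) (fun p : {x // x ∈ D} => σ p.1 p.2) := by
  intro a _ b _ hab
  have hblocks : Disjoint a.1.1 b.1.1 :=
    lp_disjoint hD a.2 b.2 (fun h => hab (Subtype.ext h))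
  rw [Function.onFun, Finset.disjoint_left]
  intro q hqa hqb
  obtain ⟨i, hi⟩ := lp_block_nonempty (hσ a.1 a.2) hqa
  exact Finset.disjoint_left.mp hblocks (lp_block_subset (hσ a.1 a.2) hqa hi)
    (lp_block_subset (hσ b.1 b.2) hqb hi)

end GlueRefine

lemma recomb_MREstep {L : Type*} [Fintype L] [DecidableEq L] (M : L → L → ℝ)
    (hM1 : ∀ α, ∑ β, M α β = 1) (r : Finset (Finset (Fin n)) → ℝ)
    (μ : L → Cfg A Finset.univ → ℝ) (hprob : ∀ β, ∑ x, μ β x = 1)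
    {D : Finset (Finset (Fin n) × L)}
    (hD : IsLabelledPartition (Finset.univ : Finset (Fin n)) D) (x : Cfg A Finset.univ) :
    recomb A D (MREstep A M r μ) x
      = ∑ E ∈ lpartitionsOf L (Finset.univ : Finset (Fin n)),
          Tent M r D E * recomb A E μ x := by
  have hR : ∑ E ∈ lpartitionsOf L (Finset.univ : Finset (Fin n)),
        Tent M r D E * recomb A E μ x
      = ∑ E ∈ (lpartitionsOf L (Finset.univ : Finset (Fin n))).filter
          (fun E => RefinesL E D),
          (∏ p ∈ D, pUfact M r p.1 (restrictL E p.1) p.2) * recomb A E μ x := by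
    rw [Finset.sum_filter]
    refine Finset.sum_congr rfl fun E _ => ?_
    unfold Tent
    rw [ite_mul, zero_mul]
  have hL : recomb A D (MREstep A M r μ) x
      = ∏ p ∈ D, ∑ F ∈ lpartitionsOf L p.1, pUfact M r p.1 F p.2 *
          ∏ q ∈ F, marg A (Finset.inter_subset_right : q.1 ∩ Finset.univ ⊆ Finset.univ)
            (μ q.2) (res A Finset.inter_subset_right x) := by
    unfold recomb
    refine Finset.prod_congr rfl fun p hp => ?_
    rw [marg_res_congr (Finset.inter_univ p.1) Finset.inter_subset_right
      (Finset.subset_univ p.1) (MREstep A M r μ p.2) x]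
    rw [marg_MREstep M hM1 r μ hprob p.1 p.2 x]
  rw [hL, hR, Finset.prod_sum D (fun p => lpartitionsOf L p.1)
    (fun p F => pUfact M r p.1 F p.2 *
      ∏ q ∈ F, marg A (Finset.inter_subset_right : q.1 ∩ Finset.univ ⊆ Finset.univ)
        (μ q.2) (res A Finset.inter_subset_right x))]
  refine Finset.sum_bij' (i := fun σ hσ => D.attach.biUnion fun p => σ p.1 p.2)
    (j := fun E hE => fun p hp => restrictL E p.1) ?_ ?_ ?_ ?_ ?_
  · intro σ hσ
    have hσ' : ∀ p (hp : p ∈ D), IsLabelledPartition p.1 (σ p hp) :=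
      fun p hp => mem_lpartitionsOf.mp (Finset.mem_pi.mp hσ p hp)
    exact Finset.mem_filter.mpr ⟨mem_lpartitionsOf.mpr (biUnion_isLP hD σ hσ').1,
      (biUnion_isLP hD σ hσ').2⟩
  · intro E hE
    exact Finset.mem_pi.mpr fun p hp => mem_lpartitionsOf.mpr
      (restrictL_isLP (mem_lpartitionsOf.mp (Finset.mem_filter.mp hE).1) p.1)
  · intro σ hσ
    have hσ' : ∀ p (hp : p ∈ D), IsLabelledPartition p.1 (σ p hp) :=
      fun p hp => mem_lpartitionsOf.mp (Finset.mem_pi.mp hσ p hp)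
    funext p hp
    exact restrictL_biUnion hD σ hσ' hp
  · intro E hE
    exact biUnion_restrictL hD (mem_lpartitionsOf.mp (Finset.mem_filter.mp hE).1)
      (Finset.mem_filter.mp hE).2
  · intro σ hσ
    have hσ' : ∀ p (hp : p ∈ D), IsLabelledPartition p.1 (σ p hp) :=
      fun p hp => mem_lpartitionsOf.mp (Finset.mem_pi.mp hσ p hp)
    have hre : recomb A (D.attach.biUnion fun p => σ p.1 p.2) μ x
        = ∏ p ∈ D.attach, ∏ q ∈ σ p.1 p.2,
            marg A (Finset.inter_subset_right : q.1 ∩ Finset.univ ⊆ Finset.univ)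
              (μ q.2) (res A Finset.inter_subset_right x) := by
      unfold recomb
      exact Finset.prod_biUnion (sigma_pairwise_disjoint hD σ hσ')
    have hpu : ∏ p ∈ D, pUfact M r p.1
          (restrictL (D.attach.biUnion fun a => σ a.1 a.2) p.1) p.2
        = ∏ p ∈ D.attach, pUfact M r p.1.1 (σ p.1 p.2) p.1.2 := by
      rw [← Finset.prod_attach D (fun p => pUfact M r p.1
        (restrictL (D.attach.biUnion fun a => σ a.1 a.2) p.1) p.2)]
      exact Finset.prod_congr rfl fun p _ => by rw [restrictL_biUnion hD σ hσ' p.2]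
    rw [hre, hpu, ← Finset.prod_mul_distrib]

end AuxDuality


/-- duality between the labelled partitioning process `Σ` and the solution of
the MRE: `E[R_{Σ_t}(μ_0) | Σ_0 = 𝛅] = R_𝛅(μ_t)`; in particular
`μ_t(α) = E[R_{Σ_t}(μ_0) | Σ_0 = {([n],α)}]`. -/
theorem MRE_duality (A : Fin n → Type*) [∀ i, Fintype (A i)]
    {L : Type*} [Fintype L] [DecidableEq L]
    (M : L → L → ℝ) (hM0 : ∀ α β, 0 ≤ M α β) (hM1 : ∀ α, ∑ β, M α β = 1)
    (r : Finset (Finset (Fin n)) → ℝ) (hr0 : ∀ P, 0 ≤ r P)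
    (hr1 : ∑ P ∈ partitionsOf (Finset.univ : Finset (Fin n)), r P = 1)
    (μ : ℕ → L → Cfg A Finset.univ → ℝ)
    (hμ0 : ∀ β, (∀ x, 0 ≤ μ 0 β x) ∧ ∑ x, μ 0 β x = 1)
    (hMRE : ∀ t α x, μ (t + 1) α x = MREstep A M r (μ t) α x) :
    (∀ t (D : LPfull n L) x,
        lppExp M r t D (fun E => recomb A E.1 (μ 0) x) = recomb A D.1 (μ t) x) ∧
      (∀ t (α : L) x, ∀ D : LPfull n L, D.1 = {(Finset.univ, α)} →
        μ t α x = lppExp M r t D (fun E => recomb A E.1 (μ 0) x)) := by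
  have hprob : ∀ t β, ∑ x, μ t β x = 1 := by
    intro t
    induction t with
    | zero => exact fun β => (hμ0 β).2
    | succ t ih =>
      intro β
      rw [show μ (t + 1) β = MREstep A M r (μ t) β from funext (hMRE t β)]
      exact sum_MREstep M hM1 r hr1 (μ t) ih β
  have main : ∀ t (D : LPfull n L) x,
      lppExp M r t D (fun E => recomb A E.1 (μ 0) x) = recomb A D.1 (μ t) x := by
    intro t
    induction t with
    | zero =>
      intro D x
      unfold lppExp
      rw [pow_zero]
      simp [Matrix.one_apply, ite_mul]
    | succ t ih =>
      intro D x
      unfold lppExp at ih ⊢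
      rw [pow_succ']
      rw [Finset.sum_congr rfl fun E (_ : E ∈ Finset.univ) => by
        rw [Matrix.mul_apply (M := TmatM M r) (N := TmatM M r ^ t), Finset.sum_mul]]
      rw [Finset.sum_comm]
      have h2 : ∀ F : LPfull n L,
          (∑ E : LPfull n L, TmatM M r D F * (TmatM M r ^ t) F E * recomb A E.1 (μ 0) x)
            = TmatM M r D F * recomb A F.1 (μ t) x := by
        intro F
        rw [Finset.sum_congr rfl fun E (_ : E ∈ Finset.univ) => mul_assoc _ _ _,
          ← Finset.mul_sum, ih F x]
      rw [Finset.sum_congr rfl fun F (_ : F ∈ Finset.univ) => h2 F]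
      rw [show μ (t + 1) = MREstep A M r (μ t) from
        funext fun α => funext fun y => hMRE t α y]
      rw [recomb_MREstep M hM1 r (μ t) (hprob t) D.2 x]
      rw [Finset.sum_subtype (lpartitionsOf L (Finset.univ : Finset (Fin n)))
        (fun E => mem_lpartitionsOf)
        (fun E => Tent M r D.1 E * recomb A E (μ t) x)]
      rfl
  refine ⟨main, ?_⟩
  intro t α x D hD1
  rw [main t D x, hD1]
  unfold recomb
  rw [Finset.prod_singleton]
  rw [marg_res_congr (Finset.inter_univ (Finset.univ : Finset (Fin n)))
    Finset.inter_subset_right (Finset.Subset.refl Finset.univ) (μ t α) x,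
    marg_self (Finset.Subset.refl Finset.univ) (μ t α) x]
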